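/- Every weak* null sequence in E''' = ((⊕_{n=1}^∞ ℓ_2^n)_{ℓ_∞})' converges uniformly to zero on the closed unit ball of E = (⊕_{n=1}^∞ ℓ_2^n)_{c_0}; that is, B_E is a limited subset of E''. -/

import Mathlib

open Filter Topology

noncomputable section

/-- The `n`-th block: the Euclidean lattice `ℓ₂^(n+1)` (so `n` ranges over all positive
dimensions). -/
abbrev Blk (n : ℕ) := EuclideanSpace ℝ (Fin (n + 1))

/-- Sequences of blocks; the ambient product in which `E`, `E'` and `E''` live. -/
abbrev PreE := ∀ n, Blk n

/-- The coordinatewise (lattice) order. -/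
def ele (x y : PreE) : Prop := ∀ n i, x n i ≤ y n i

/-- Membership in `E = (⊕ ℓ₂ⁿ)_{c₀}`: block norms tend to zero. -/
def memE0 (x : PreE) : Prop := Tendsto (fun n => ‖x n‖) atTop (𝓝 0)

/-- Membership in `E' = (⊕ ℓ₂ⁿ)_{ℓ₁}`: block norms are summable. -/
def memE1 (x : PreE) : Prop := Summable fun n => ‖x n‖

/-- The duality pairing `⟨f, x⟩ = Σₙ Σᵢ f n i * x n i`. -/
def pairE (f x : PreE) : ℝ := ∑' n, ∑ i, f n i * x n i

/-- `E'' = (⊕ ℓ₂ⁿ)_{ℓ_∞}`, the ℓ∞-sum, as a genuine Banach space. -/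
abbrev Epp := ↥(lp Blk ⊤)

/-- The diagonal unit vectors: `dg n` is `1` in the last coordinate of block `n`, `0` elsewhere. -/
def dg (n : ℕ) : PreE := fun m => if m = n then EuclideanSpace.single (Fin.last m) 1 else 0

/-- The third dual `E''' = (E'')'`: continuous linear functionals on `E'' = (⊕ ℓ₂ⁿ)_{ℓ∞}`. -/
abbrev Dppp := Epp →L[ℝ] ℝ

/-- Membership of an element of `E''` in (the canonical copy of) `E = (⊕ ℓ₂ⁿ)_{c₀}`. -/
def memEc (x : Epp) : Prop := Tendsto (fun n => ‖(x : PreE) n‖) atTop (𝓝 0)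

/-- `E^⊥ ⊆ E'''`: the functionals vanishing on `E`. -/
def inEperp (h : Dppp) : Prop := ∀ x : Epp, memEc x → h x = 0

/-- Positivity in `E''` (coordinatewise). -/
def epos (x : Epp) : Prop := ∀ n i, 0 ≤ (x : PreE) n i

/-- `|z| ≤ x` coordinatewise in `E''`. -/
def eabsLe (z x : Epp) : Prop := ∀ n i, |(z : PreE) n i| ≤ (x : PreE) n i

/-- The modulus of a functional `f ∈ E'''` evaluated at `x ≥ 0`: `|f|(x) = sup_{|z| ≤ x} f z`. -/
def modApp (f : Dppp) (x : Epp) : ℝ := sSup ((fun z => f z) '' {z | eabsLe z x})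

/-!
For `f ∈ (lp E ∞)'` and `x` in the unit ball of the `c₀`-sum, `x = ∑ₙ singleₙ (xₙ)` in norm, so
`|f x| ≤ ∑ₙ ‖f ∘ singleₙ‖`. It therefore suffices that this `ℓ₁`-norm of the block restrictions
tends to zero along a weak* null sequence; each single term does, as the blocks are finite
dimensional. Otherwise a gliding hump yields a subsequence `f (J r)` and disjoint finite sets of
blocks `F r` carrying `f (J r)`-mass at least `ε / 2`. Gluing norming vectors of these blocks into a
single `v`, the set functions `B ↦ f (J r) (1_{⋃_{s ∈ B} F s} • v)` on `ℕ` are finitely additive,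
uniformly bounded (Banach–Steinhaus) and tend to zero pointwise, yet have diagonal values at least
`ε / 2`. Rosenthal's lemma provides an infinite `M` on which the off-diagonal parts are small, so
the values at `M` stay away from zero for `r ∈ M`, contradicting weak* nullity.
-/

open scoped Function ENNReal

section AdditiveSetFunction

variable {α : Type*} {m : Set α → ℝ}

theorem map_empty_of_additive (hadd : ∀ A B, Disjoint A B → m (A ∪ B) = m A + m B) :
    m ∅ = 0 := by
  simpa using hadd ∅ ∅ (Set.disjoint_empty _)

theorem map_biUnion_of_additive (hadd : ∀ A B, Disjoint A B → m (A ∪ B) = m A + m B)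
    {ι : Type*} {s : Finset ι} {B : ι → Set α} (hB : (s : Set ι).PairwiseDisjoint B) :
    m (⋃ i ∈ s, B i) = ∑ i ∈ s, m (B i) := by
  classical
  induction s using Finset.induction_on with
  | empty => simpa using map_empty_of_additive hadd
  | insert a s ha ih =>
    rw [Finset.coe_insert, Set.pairwiseDisjoint_insert_of_notMem (by simpa using ha)] at hB
    rw [Finset.set_biUnion_insert, Finset.sum_insert ha,
      hadd _ _ (Set.disjoint_iUnion₂_right.2 fun i (hi : i ∈ s) => hB.2 i hi), ih hB.1]

theorem sum_abs_le_of_additive (hadd : ∀ A B, Disjoint A B → m (A ∪ B) = m A + m B)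
    {C : ℝ} (hbd : ∀ A, |m A| ≤ C) {ι : Type*} {s : Finset ι} {B : ι → Set α}
    (hB : (s : Set ι).PairwiseDisjoint B) : ∑ i ∈ s, |m (B i)| ≤ 2 * C := by
  classical
  set P := s.filter fun i => 0 ≤ m (B i)
  set N := s.filter fun i => ¬0 ≤ m (B i)
  have hP : ∑ i ∈ P, |m (B i)| = m (⋃ i ∈ P, B i) := by
    rw [map_biUnion_of_additive hadd (hB.subset (Finset.coe_subset.2 (Finset.filter_subset _ _)))]
    exact Finset.sum_congr rfl fun i hi => abs_of_nonneg (Finset.mem_filter.1 hi).2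
  have hN : ∑ i ∈ N, |m (B i)| = -m (⋃ i ∈ N, B i) := by
    rw [map_biUnion_of_additive hadd (hB.subset (Finset.coe_subset.2 (Finset.filter_subset _ _))),
      ← Finset.sum_neg_distrib]
    exact Finset.sum_congr rfl fun i hi => abs_of_neg (not_le.1 (Finset.mem_filter.1 hi).2)
  rw [← Finset.sum_filter_add_sum_filter_not s fun i => 0 ≤ m (B i), hP, hN]
  linarith [le_of_abs_le (hbd (⋃ i ∈ P, B i)), neg_le_of_abs_le (hbd (⋃ i ∈ N, B i))]

end AdditiveSetFunction

section Rosenthal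

/-- The invariant of the proof of Rosenthal's lemma: stages of every length `t` are impossible,
since the `t` disjoint pieces of `m (pt 0)`-mass above `δ` contradict the boundedness of `m`. -/
structure RosenthalStage (m : ℕ → Set ℕ → ℝ) (δ : ℝ) (R : Set ℕ) (t : ℕ) where
  pt : ℕ → ℕ
  injective_pt : pt.Injective
  pt_mem : ∀ α, pt α ∈ R
  piece : ℕ → ℕ → Set ℕ
  pairwiseDisjoint_piece : ∀ α, (Set.Iio t).PairwiseDisjoint (piece α)
  disjoint_piece_range : ∀ α, ∀ i < t, Disjoint (piece α i) (Set.range pt)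
  lt_abs_piece : ∀ α, ∀ i < t, δ < |m (pt α) (piece α i)|

variable {m : ℕ → Set ℕ → ℝ} {δ : ℝ} {R : Set ℕ}

theorem infinite_range_pair (p : ℕ) : (Set.range (Nat.pair p)).Infinite :=
  Set.infinite_range_of_injective fun _ _ h => (Nat.pair_eq_pair.1 h).2

theorem eq_of_mem_range_pair {p q n : ℕ} (hp : n ∈ Set.range (Nat.pair p))
    (hq : n ∈ Set.range (Nat.pair q)) : p = q := by
  obtain ⟨a, rfl⟩ := hp
  obtain ⟨b, hb⟩ := hq
  exact (Nat.pair_eq_pair.1 hb).1.symm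

def RosenthalStage.zero (hR : R.Infinite) : RosenthalStage m δ R 0 where
  pt α := hR.natEmbedding R α
  injective_pt := Subtype.val_injective.comp (hR.natEmbedding R).injective
  pt_mem α := (hR.natEmbedding R α).2
  piece _ _ := ∅
  pairwiseDisjoint_piece _ := by simp
  disjoint_piece_range _ _ h := absurd h (Nat.not_lt_zero _)
  lt_abs_piece _ _ h := absurd h (Nat.not_lt_zero _)

/-- Split the candidates into the infinitely many infinite classes `range (Nat.pair p)`; by
assumption each class contains a point `α p` and a set `A p` of other candidates in the class
with mass above `δ`. The points `α p` are the new candidates and `A p` their new pieces. -/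
theorem RosenthalStage.nonempty_succ
    (hfail : ∀ M ⊆ R, M.Infinite → ∃ r ∈ M, ∃ A ⊆ M \ {r}, δ < |m r A|) {t : ℕ}
    (S : RosenthalStage m δ R t) : Nonempty (RosenthalStage m δ R (t + 1)) := by
  have key : ∀ p, ∃ α ∈ Set.range (Nat.pair p),
      ∃ A ⊆ S.pt '' Set.range (Nat.pair p) \ {S.pt α}, δ < |m (S.pt α) A| := by
    intro p
    obtain ⟨_, ⟨α, hα, rfl⟩, A, hA, hδ⟩ := hfail (S.pt '' Set.range (Nat.pair p))
      (by rintro _ ⟨α, -, rfl⟩; exact S.pt_mem α)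
      ((infinite_range_pair p).image S.injective_pt.injOn)
    exact ⟨α, hα, A, hA, hδ⟩
  choose α hα A hA hδ using key
  have hApt : ∀ p q, S.pt (α q) ∉ A p := by
    intro p q hq
    obtain ⟨⟨β, hβ, hβq⟩, hne⟩ := hA p hq
    obtain rfl := S.injective_pt hβq
    obtain rfl := eq_of_mem_range_pair hβ (hα q)
    exact hne rfl
  have hA_range : ∀ p, A p ⊆ Set.range S.pt := fun p =>
    (hA p).trans (Set.sdiff_subset.trans (Set.image_subset_range _ _))
  refine ⟨{ pt := S.pt ∘ α
            injective_pt := S.injective_pt.comp fun p q h =>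
              eq_of_mem_range_pair (h ▸ hα p) (hα q)
            pt_mem := fun p => S.pt_mem (α p)
            piece := fun p => Function.update (S.piece (α p)) t (A p)
            pairwiseDisjoint_piece := ?_
            disjoint_piece_range := ?_
            lt_abs_piece := ?_ }⟩
  · intro p i hi j hj hij
    simp only [Set.mem_Iio, Nat.lt_succ_iff_lt_or_eq] at hi hj
    simp only [Function.onFun]
    rcases hi with hi | rfl <;> rcases hj with hj | rfl
    · simpa [Function.update_of_ne hi.ne, Function.update_of_ne hj.ne] using
        S.pairwiseDisjoint_piece (α p) hi hj hij
    · simpa [Function.update_of_ne hi.ne] using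
        (S.disjoint_piece_range (α p) i hi).mono_right (hA_range p)
    · simpa [Function.update_of_ne hj.ne] using
        ((S.disjoint_piece_range (α p) j hj).mono_right (hA_range p)).symm
    · exact absurd rfl hij
  · intro p i hi
    rcases Nat.lt_succ_iff_lt_or_eq.1 hi with hi | rfl
    · simpa [Function.update_of_ne hi.ne] using
        (S.disjoint_piece_range (α p) i hi).mono_right (Set.range_comp_subset_range α S.pt)
    · simpa [Set.disjoint_right] using fun q => hApt p q
  · intro p i hi
    rcases Nat.lt_succ_iff_lt_or_eq.1 hi with hi | rfl
    · simpa [Function.update_of_ne hi.ne] using S.lt_abs_piece (α p) i hi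
    · simpa using hδ p

/-- Rosenthal's lemma. -/
theorem exists_infinite_subset_forall_abs_le {C δ : ℝ} (hδ : 0 < δ)
    (hadd : ∀ r A B, Disjoint A B → m r (A ∪ B) = m r A + m r B) (hbd : ∀ r A, |m r A| ≤ C)
    (hR : R.Infinite) : ∃ M ⊆ R, M.Infinite ∧ ∀ r ∈ M, ∀ A ⊆ M \ {r}, |m r A| ≤ δ := by
  by_contra! hfail
  have stage : ∀ t, Nonempty (RosenthalStage m δ R t) := fun t =>
    Nat.rec ⟨.zero hR⟩ (fun _ ⟨S⟩ => S.nonempty_succ hfail) t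
  obtain ⟨t, ht⟩ := exists_nat_gt (2 * C / δ)
  obtain ⟨S⟩ := stage t
  have hsum : ∑ i ∈ Finset.range t, |m (S.pt 0) (S.piece 0 i)| ≤ 2 * C :=
    sum_abs_le_of_additive (hadd (S.pt 0)) (hbd (S.pt 0))
      (by simpa using S.pairwiseDisjoint_piece 0)
  have hlow : t * δ ≤ ∑ i ∈ Finset.range t, |m (S.pt 0) (S.piece 0 i)| := by
    simpa using Finset.sum_le_sum fun i hi =>
      (S.lt_abs_piece 0 i (Finset.mem_range.1 hi)).le
  rw [div_lt_iff₀ hδ] at ht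
  linarith

end Rosenthal

theorem exists_frequently_le_abs_of_not_tendsto {α : Type*} {l : Filter α} {u : α → ℝ}
    (h : ¬Tendsto u l (𝓝 0)) : ∃ c > 0, ∃ᶠ k in l, c ≤ |u k| := by
  by_contra! h'
  exact h (Metric.tendsto_nhds.2 fun ε hε => by simpa [Real.dist_eq] using h' ε hε)

theorem tendsto_apply_singleton_of_additive {m : ℕ → Set ℕ → ℝ} {C : ℝ}
    (hadd : ∀ r A B, Disjoint A B → m r (A ∪ B) = m r A + m r B) (hbd : ∀ r A, |m r A| ≤ C)
    (hlim : ∀ A, Tendsto (fun r => m r A) atTop (𝓝 0)) :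
    Tendsto (fun r => m r {r}) atTop (𝓝 0) := by
  by_contra h
  obtain ⟨c, hc, hfreq⟩ := exists_frequently_le_abs_of_not_tendsto h
  obtain ⟨M, hMR, hM, hsmall⟩ := exists_infinite_subset_forall_abs_le (half_pos hc) hadd hbd
    (Nat.frequently_atTop_iff_infinite.1 hfreq)
  have hbig : ∀ r ∈ M, c / 2 ≤ |m r M| := by
    intro r hr
    have hsplit : m r M = m r {r} + m r (M \ {r}) := by
      rw [← hadd r _ _ Set.disjoint_sdiff_right,
        Set.union_sdiff_cancel (Set.singleton_subset_iff.2 hr)]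
    have hr' : c ≤ |m r {r}| := hMR hr
    rw [eq_sub_of_add_eq hsplit.symm] at hr'
    linarith [hsmall r hr _ subset_rfl, abs_sub (m r M) (m r (M \ {r}))]
  have hlimM := (hlim M).abs
  rw [abs_zero] at hlimM
  obtain ⟨r, hrM, hr⟩ := ((Nat.frequently_atTop_iff_infinite.2 hM).and_eventually
    (hlimM.eventually (gt_mem_nhds (half_pos hc)))).exists
  exact (hbig r hrM).not_gt hr

section GlidingHump

variable {a : ℕ → ℕ → ℝ} {ε : ℝ}

theorem exists_half_le_sum_Ico (hε : 0 < ε) (ha : ∀ j, Summable (a j))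
    (hcol : ∀ n, Tendsto (fun j => a j n) atTop (𝓝 0))
    (hfreq : ∃ᶠ j in atTop, ε ≤ ∑' n, a j n) (j₀ N₀ : ℕ) :
    ∃ j N, j₀ < j ∧ N₀ ≤ N ∧ ε / 2 ≤ ∑ n ∈ Finset.Ico N₀ N, a j n := by
  have hhead : Tendsto (fun j => ∑ n ∈ Finset.range N₀, a j n) atTop (𝓝 0) := by
    simpa using tendsto_finsetSum (Finset.range N₀) fun n _ => hcol n
  obtain ⟨j, hjε, hjhead, hj₀⟩ := (hfreq.and_eventually
    ((hhead.eventually (gt_mem_nhds (by positivity : 0 < ε / 4))).and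
      (eventually_gt_atTop j₀))).exists
  have htail := (ha j).hasSum.tendsto_sum_nat.eventually
    (lt_mem_nhds (by linarith : ∑' n, a j n - ε / 4 < ∑' n, a j n))
  obtain ⟨N, hNtail, hN₀⟩ := (htail.and (eventually_ge_atTop N₀)).exists
  refine ⟨j, N, hj₀, hN₀, ?_⟩
  linarith [Finset.sum_range_add_sum_Ico (a j) hN₀]

theorem exists_glidingHump (hε : 0 < ε) (ha : ∀ j, Summable (a j))
    (hcol : ∀ n, Tendsto (fun j => a j n) atTop (𝓝 0))
    (hfreq : ∃ᶠ j in atTop, ε ≤ ∑' n, a j n) :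
    ∃ J : ℕ → ℕ, ∃ F : ℕ → Finset ℕ, StrictMono J ∧ Pairwise (Disjoint on F) ∧
      ∀ r, ε / 2 ≤ ∑ n ∈ F r, a (J r) n := by
  choose j N hj hN hsum using fun p : ℕ × ℕ => exists_half_le_sum_Ico hε ha hcol hfreq p.1 p.2
  set x : ℕ → ℕ × ℕ := fun r => (fun p => (j p, N p))^[r] (0, 0)
  have hx : ∀ r, x (r + 1) = (j (x r), N (x r)) := fun r =>
    Function.iterate_succ_apply' _ r (0, 0)
  have hmono : Monotone fun r => (x r).2 := monotone_nat_of_le_succ fun r => by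
    rw [hx]; exact hN (x r)
  refine ⟨fun r => (x (r + 1)).1, fun r => Finset.Ico (x r).2 (x (r + 1)).2,
    strictMono_nat_of_lt_succ fun r => ?_, fun r s hrs => ?_, fun r => ?_⟩
  · rw [hx (r + 1)]; exact hj _
  · rw [Function.onFun, ← Finset.disjoint_coe, Finset.coe_Ico, Finset.coe_Ico]
    exact hmono.pairwise_disjoint_on_Ico_succ hrs
  · simpa only [hx r] using hsum (x r)

end GlidingHump

section FiniteDimensional

variable {V : Type*} [NormedAddCommGroup V] [NormedSpace ℝ V] [FiniteDimensional ℝ V]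

theorem ContinuousLinearMap.exists_norm_le_one_apply_eq_norm (φ : V →L[ℝ] ℝ) :
    ∃ u : V, ‖u‖ ≤ 1 ∧ φ u = ‖φ‖ := by
  obtain ⟨u, hu, hφu⟩ : ‖φ‖ ∈ (fun x => ‖φ x‖) '' Metric.closedBall 0 1 := by
    rw [← φ.sSup_unitClosedBall_eq_norm]
    exact ((ProperSpace.isCompact_closedBall 0 1).image (by fun_prop)).sSup_mem
      ((Metric.nonempty_closedBall.2 zero_le_one).image _)
  rw [mem_closedBall_zero_iff] at hu
  dsimp only at hφu
  rcases abs_choice (φ u) with h | h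
  · exact ⟨u, hu, by rw [← hφu, Real.norm_eq_abs, h]⟩
  · exact ⟨-u, by rwa [norm_neg], by rw [map_neg, ← hφu, Real.norm_eq_abs, h]⟩

theorem ContinuousLinearMap.tendsto_norm_zero_of_tendsto_apply {F α : Type*}
    [NormedAddCommGroup F] [NormedSpace ℝ F] {l : Filter α} {φ : α → V →L[ℝ] F}
    (h : ∀ u, Tendsto (fun k => φ k u) l (𝓝 0)) : Tendsto (fun k => ‖φ k‖) l (𝓝 0) := by
  set b := Module.finBasis ℝ V
  obtain ⟨C, -, hC⟩ := b.exists_opNorm_le (F := F)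
  have hsum : Tendsto (fun k => C * ∑ i, ‖φ k (b i)‖) l (𝓝 0) := by
    simpa using (tendsto_finsetSum Finset.univ fun i _ => (h (b i)).norm).const_mul C
  refine squeeze_zero (fun k => norm_nonneg _) (fun k => ?_) hsum
  exact hC (by positivity) fun i => Finset.single_le_sum (fun i _ => norm_nonneg (φ k (b i)))
    (Finset.mem_univ i)

end FiniteDimensional

section lpIndicator

variable {ι : Type*} {E : ι → Type*} [∀ i, NormedAddCommGroup (E i)]

open scoped Classical in
def lpIndicator (A : Set ι) (x : lp E ∞) : lp E ∞ :=
  ⟨fun i => if i ∈ A then x i else 0, memℓp_infty ⟨‖x‖, by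
    rintro _ ⟨i, rfl⟩
    dsimp only
    split_ifs
    exacts [lp.norm_apply_le_norm ENNReal.top_ne_zero x i, by simp]⟩⟩

open scoped Classical in
theorem lpIndicator_apply (A : Set ι) (x : lp E ∞) (i : ι) :
    lpIndicator A x i = if i ∈ A then x i else 0 := rfl

theorem norm_lpIndicator_le (A : Set ι) (x : lp E ∞) : ‖lpIndicator A x‖ ≤ ‖x‖ := by
  refine lp.norm_le_of_forall_le (norm_nonneg x) fun i => ?_
  rw [lpIndicator_apply]
  split_ifs
  exacts [lp.norm_apply_le_norm ENNReal.top_ne_zero x i, by simp]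

theorem lpIndicator_union {A B : Set ι} (h : Disjoint A B) (x : lp E ∞) :
    lpIndicator (A ∪ B) x = lpIndicator A x + lpIndicator B x := by
  ext i
  simp only [lp.coeFn_add, Pi.add_apply, lpIndicator_apply]
  split_ifs <;> simp_all [Set.disjoint_left]

theorem lpIndicator_finset [DecidableEq ι] (s : Finset ι) (x : lp E ∞) :
    lpIndicator s x = ∑ i ∈ s, lp.single ∞ i (x i) := by
  ext j
  rw [lp.coeFn_sum, Finset.sum_apply]
  simp only [lp.coeFn_single, Finset.sum_pi_single, lpIndicator_apply, Finset.mem_coe]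

theorem lp.hasSum_single_of_tendsto_cofinite [DecidableEq ι] {x : lp E ∞}
    (hx : Tendsto (fun i => ‖x i‖) cofinite (𝓝 0)) :
    HasSum (fun i => lp.single ∞ i (x i)) x := by
  rw [HasSum, Metric.tendsto_nhds]
  intro ε hε
  have hfin := Filter.eventually_cofinite.1 (hx.eventually (gt_mem_nhds (half_pos hε)))
  filter_upwards [Filter.eventually_ge_atTop hfin.toFinset] with s hs
  rw [← lpIndicator_finset, dist_eq_norm]
  refine (lp.norm_le_of_forall_le (half_pos hε).le fun i => ?_).trans_lt (half_lt_self hε)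
  simp only [lp.coeFn_sub, Pi.sub_apply, lpIndicator_apply, Finset.mem_coe]
  split_ifs with hi
  · simpa using (half_pos hε).le
  · simpa using (not_le.1 fun h => hi (hs (by simpa using h))).le

theorem lp.exists_norm_le_one_eq_on_pairwise_disjoint {κ : Type*} {F : κ → Finset ι}
    (hF : Pairwise (Disjoint on F)) {u : κ → ∀ i, E i} (hu : ∀ k i, ‖u k i‖ ≤ 1) :
    ∃ V : lp E ∞, ‖V‖ ≤ 1 ∧ ∀ k, ∀ i ∈ F k, V i = u k i := by
  classical
  let v : ∀ i, E i := fun i => if h : ∃ k, i ∈ F k then u h.choose i else 0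
  have hv₁ : ∀ i, ‖v i‖ ≤ 1 := fun i => by
    by_cases h : ∃ k, i ∈ F k
    · simpa [v, h] using hu _ i
    · simp [v, h]
  refine ⟨⟨v, memℓp_infty ⟨1, by rintro _ ⟨i, rfl⟩; exact hv₁ i⟩⟩,
    lp.norm_le_of_forall_le zero_le_one hv₁, fun k i hi => ?_⟩
  have h : ∃ k, i ∈ F k := ⟨k, hi⟩
  obtain rfl : h.choose = k := by
    by_contra hne
    exact Finset.disjoint_left.1 (hF hne) h.choose_spec hi
  exact dif_pos h

end lpIndicator

section blockNorm

variable {ι : Type*} [DecidableEq ι] {E : ι → Type*} [∀ i, NormedAddCommGroup (E i)]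
  [∀ i, NormedSpace ℝ (E i)]

def blockNorm (f : lp E ∞ →L[ℝ] ℝ) (i : ι) : ℝ :=
  ‖f.comp (lp.singleContinuousLinearMap ℝ E ∞ i)‖

theorem blockNorm_nonneg (f : lp E ∞ →L[ℝ] ℝ) (i : ι) : 0 ≤ blockNorm f i := norm_nonneg _

theorem abs_apply_single_le (f : lp E ∞ →L[ℝ] ℝ) (i : ι) (u : E i) :
    |f (lp.single ∞ i u)| ≤ blockNorm f i * ‖u‖ :=
  (f.comp (lp.singleContinuousLinearMap ℝ E ∞ i)).le_opNorm u

variable [∀ i, FiniteDimensional ℝ (E i)]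

theorem exists_norm_le_one_apply_single_eq_blockNorm (f : lp E ∞ →L[ℝ] ℝ) (i : ι) :
    ∃ u : E i, ‖u‖ ≤ 1 ∧ f (lp.single ∞ i u) = blockNorm f i :=
  (f.comp (lp.singleContinuousLinearMap ℝ E ∞ i)).exists_norm_le_one_apply_eq_norm

theorem sum_blockNorm_le (f : lp E ∞ →L[ℝ] ℝ) (s : Finset ι) :
    ∑ i ∈ s, blockNorm f i ≤ ‖f‖ := by
  choose u hu hfu using exists_norm_le_one_apply_single_eq_blockNorm f
  let U : lp E ∞ := ⟨u, memℓp_infty ⟨1, by rintro _ ⟨i, rfl⟩; exact hu i⟩⟩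
  have hU : ‖U‖ ≤ 1 := lp.norm_le_of_forall_le zero_le_one hu
  calc ∑ i ∈ s, blockNorm f i = f (lpIndicator s U) := by
        rw [lpIndicator_finset, map_sum]
        exact Finset.sum_congr rfl fun i _ => (hfu i).symm
    _ ≤ ‖f‖ * ‖lpIndicator s U‖ := (le_abs_self _).trans (f.le_opNorm _)
    _ ≤ ‖f‖ := mul_le_of_le_one_right (norm_nonneg f) ((norm_lpIndicator_le _ U).trans hU)

theorem summable_blockNorm (f : lp E ∞ →L[ℝ] ℝ) : Summable (blockNorm f) :=
  summable_of_sum_le (blockNorm_nonneg f) (sum_blockNorm_le f)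

theorem abs_apply_le_tsum_blockNorm (f : lp E ∞ →L[ℝ] ℝ) {x : lp E ∞}
    (hx : Tendsto (fun i => ‖x i‖) cofinite (𝓝 0)) (hx₁ : ‖x‖ ≤ 1) :
    |f x| ≤ ∑' i, blockNorm f i := by
  have hfx : HasSum (fun i => f (lp.single ∞ i (x i))) (f x) :=
    (lp.hasSum_single_of_tendsto_cofinite hx).mapL f
  have hle : ∀ i, |f (lp.single ∞ i (x i))| ≤ blockNorm f i := fun i =>
    (abs_apply_single_le f i (x i)).trans (mul_le_of_le_one_right (blockNorm_nonneg f i)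
      ((lp.norm_apply_le_norm ENNReal.top_ne_zero x i).trans hx₁))
  have hsum := (summable_blockNorm f).hasSum
  exact abs_le.2 ⟨hasSum_le (fun i => neg_le_of_abs_le (hle i)) hsum.neg hfx,
    hasSum_le (fun i => le_of_abs_le (hle i)) hfx hsum⟩

theorem tendsto_blockNorm_of_tendsto_apply {f : ℕ → lp E ∞ →L[ℝ] ℝ}
    (hf : ∀ x, Tendsto (fun k => f k x) atTop (𝓝 0)) (i : ι) :
    Tendsto (fun k => blockNorm (f k) i) atTop (𝓝 0) :=
  ContinuousLinearMap.tendsto_norm_zero_of_tendsto_apply fun u => hf (lp.single ∞ i u)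

theorem tendsto_sum_blockNorm_of_pairwise_disjoint {f : ℕ → lp E ∞ →L[ℝ] ℝ}
    (hf : ∀ x, Tendsto (fun k => f k x) atTop (𝓝 0)) {F : ℕ → Finset ι}
    (hF : Pairwise (Disjoint on F)) :
    Tendsto (fun k => ∑ i ∈ F k, blockNorm (f k) i) atTop (𝓝 0) := by
  have : ∀ i, CompleteSpace (E i) := fun i => FiniteDimensional.complete ℝ (E i)
  obtain ⟨C, hC⟩ := banach_steinhaus fun x => by
    obtain ⟨c, hc⟩ := (hf x).norm.bddAbove_range
    exact ⟨c, fun k => hc ⟨k, rfl⟩⟩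
  choose u hu hfu using fun k => exists_norm_le_one_apply_single_eq_blockNorm (f k)
  obtain ⟨V, hV₁, hV⟩ := lp.exists_norm_le_one_eq_on_pairwise_disjoint hF hu
  let m : ℕ → Set ℕ → ℝ := fun k B => f k (lpIndicator (⋃ j ∈ B, (F j : Set ι)) V)
  have hadd : ∀ k A B, Disjoint A B → m k (A ∪ B) = m k A + m k B := by
    intro k A B hAB
    simp only [m, Set.biUnion_union]
    rw [lpIndicator_union, map_add]
    refine Set.disjoint_iUnion₂_left.2 fun a ha => Set.disjoint_iUnion₂_right.2 fun b hb => ?_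
    exact Finset.disjoint_coe.2 (hF fun hab => Set.disjoint_left.1 hAB ha (hab ▸ hb))
  have hbd : ∀ k A, |m k A| ≤ C := fun k A =>
    ((f k).le_opNorm _).trans (mul_le_of_le_one_right (norm_nonneg _)
      ((norm_lpIndicator_le _ V).trans hV₁) |>.trans (hC k))
  refine (tendsto_apply_singleton_of_additive hadd hbd fun A => hf _).congr fun k => ?_
  simp only [m, Set.mem_singleton_iff, Set.iUnion_iUnion_eq_left, lpIndicator_finset, map_sum]
  exact Finset.sum_congr rfl fun i hi => by rw [← hfu k i, ← hV k i hi]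

end blockNorm

theorem tendsto_tsum_blockNorm_of_tendsto_apply {E : ℕ → Type*} [∀ n, NormedAddCommGroup (E n)]
    [∀ n, NormedSpace ℝ (E n)] [∀ n, FiniteDimensional ℝ (E n)] {f : ℕ → lp E ∞ →L[ℝ] ℝ}
    (hf : ∀ x, Tendsto (fun k => f k x) atTop (𝓝 0)) :
    Tendsto (fun k => ∑' n, blockNorm (f k) n) atTop (𝓝 0) := by
  by_contra h
  obtain ⟨ε, hε, hfreq⟩ := exists_frequently_le_abs_of_not_tendsto h
  obtain ⟨J, F, hJ, hF, hhump⟩ := exists_glidingHump hε (fun k => summable_blockNorm (f k))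
    (tendsto_blockNorm_of_tendsto_apply hf)
    (hfreq.mono fun k hk => by rwa [abs_of_nonneg (tsum_nonneg (blockNorm_nonneg _))] at hk)
  obtain ⟨r, hr⟩ := ((tendsto_sum_blockNorm_of_pairwise_disjoint
    (fun x => (hf x).comp hJ.tendsto_atTop) hF).eventually (gt_mem_nhds (half_pos hε))).exists
  exact (hhump r).not_gt hr

/-- Every weak* null sequence in `E''' = ((⊕ ℓ₂ⁿ)_{ℓ∞})'` converges uniformly to zero on the
closed unit ball of `E = (⊕ ℓ₂ⁿ)_{c₀}`; i.e. `B_E` is a limited subset of `E''`. -/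
theorem stmt_14 (f : ℕ → Dppp) (hwstar : ∀ x : Epp, Tendsto (fun k => f k x) atTop (𝓝 0)) :
    Tendsto (fun k => sSup ((fun x => |f k x|) '' {x : Epp | memEc x ∧ ‖x‖ ≤ 1}))
      atTop (𝓝 0) := by
  refine squeeze_zero (fun k => Real.sSup_nonneg ?_) (fun k => Real.sSup_le ?_ ?_)
    (tendsto_tsum_blockNorm_of_tendsto_apply hwstar)
  · rintro _ ⟨x, -, rfl⟩
    exact abs_nonneg _
  · rintro _ ⟨x, ⟨hx, hx₁⟩, rfl⟩
    exact abs_apply_le_tsum_blockNorm (f k) (Nat.cofinite_eq_atTop ▸ hx) hx₁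
  · exact tsum_nonneg (blockNorm_nonneg _)
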